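/- arXiv:1206.0251 — 4 statements merged into one kernel-verified Lean document; each statement's English description precedes it below -/
import Mathlib

section
/- Let ℓ ≥ 1 be an integer, a > 0 real, and x ∈ ℝ. Then (1/(2πi)) ∫ over the line Re(ω)=a of e^{xω} ω^{-(ℓ+1)} dω equals x^ℓ/ℓ! if x > 0, and equals 0 if x ≤ 0. -/
/-!
For `0 < Re c`, the one-sided function `u ↦ 1_{u > 0} uⁿ e^{-cu}` has Fourier transform
`n! / (c + 2πiξ)ⁿ⁺¹` (integrate by parts `n` times). When `n ≥ 1` this function is
continuous and its Fourier transform is `O(ξ⁻²)`, hence integrable, so Fourier inversion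
recovers it at every point. With `c = a`, the substitution `t = 2πξ` and the factor
`e^{ax} / ℓ!` turn the inversion integral into the line integral of `e^{xω} ω^{-(ℓ+1)}`
over `Re ω = a`.
-/

open Complex Real MeasureTheory
open Set Filter Topology FourierTransform

section Laplace

variable {c : ℂ}

lemma norm_ofReal_pow_mul_cexp_neg_mul (n : ℕ) (c : ℂ) {t : ℝ} (ht : 0 ≤ t) :
    ‖(t : ℂ) ^ n * cexp (-(c * t))‖ = t ^ n * Real.exp (-(c.re * t)) := by
  simp [norm_exp, abs_of_nonneg ht]

lemma integrableOn_ofReal_pow_mul_cexp_neg_mul_Ioi (n : ℕ) (hc : 0 < c.re) :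
    IntegrableOn (fun t : ℝ ↦ (t : ℂ) ^ n * cexp (-(c * t))) (Ioi 0) := by
  have hg := integrableOn_rpow_mul_exp_neg_mul_rpow (s := n)
    (by linarith [n.cast_nonneg (α := ℝ)]) zero_lt_one hc
  refine hg.mono' (by fun_prop) ?_
  filter_upwards [ae_restrict_mem measurableSet_Ioi] with t ht
  rw [norm_ofReal_pow_mul_cexp_neg_mul n c (le_of_lt ht)]
  simp

lemma tendsto_ofReal_pow_mul_cexp_neg_mul_atTop (n : ℕ) (hc : 0 < c.re) :
    Tendsto (fun t : ℝ ↦ (t : ℂ) ^ n * cexp (-(c * t))) atTop (𝓝 0) := by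
  rw [tendsto_zero_iff_norm_tendsto_zero]
  refine (tendsto_rpow_mul_exp_neg_mul_atTop_nhds_zero n c.re hc).congr' ?_
  filter_upwards [eventually_ge_atTop 0] with t ht
  rw [norm_ofReal_pow_mul_cexp_neg_mul n c ht]
  simp

lemma hasDerivAt_neg_cexp_neg_mul_div (hc : c ≠ 0) (t : ℝ) :
    HasDerivAt (fun s : ℝ ↦ -cexp (-(c * s)) / c) (cexp (-(c * t))) t := by
  have := ((((hasDerivAt_id (t : ℂ)).const_mul c).fun_neg.cexp).div_const c).fun_neg.comp_ofReal
  convert this using 1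
  · simp [neg_div]
  · field_simp
    simp

theorem integral_ofReal_pow_mul_cexp_neg_mul_Ioi (n : ℕ) (hc : 0 < c.re) :
    ∫ t in Ioi (0 : ℝ), (t : ℂ) ^ n * cexp (-(c * t)) = n.factorial / c ^ (n + 1) := by
  have hc0 : c ≠ 0 := fun h ↦ by simp [h] at hc
  induction n with
  | zero =>
    simpa [neg_mul, ← neg_div] using integral_exp_mul_complex_Ioi (a := -c) (by simpa) 0
  | succ n ih =>
    have hu (t : ℝ) : HasDerivAt (fun s : ℝ ↦ (s : ℂ) ^ (n + 1)) ((n + 1) * (t : ℂ) ^ n) t := by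
      simpa using (hasDerivAt_pow (n + 1) (t : ℂ)).comp_ofReal
    have hv := hasDerivAt_neg_cexp_neg_mul_div hc0
    have hu'v : (fun t : ℝ ↦ (n + 1) * (t : ℂ) ^ n * (-cexp (-(c * t)) / c))
        = fun t : ℝ ↦ -((n + 1) / c) * ((t : ℂ) ^ n * cexp (-(c * t))) := by
      ext t; field_simp
    have huv : (fun t : ℝ ↦ (t : ℂ) ^ (n + 1) * (-cexp (-(c * t)) / c))
        = fun t : ℝ ↦ -c⁻¹ * ((t : ℂ) ^ (n + 1) * cexp (-(c * t))) := by
      ext t; field_simp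
    have hzero :
        Tendsto (fun t : ℝ ↦ (t : ℂ) ^ (n + 1) * (-cexp (-(c * t)) / c)) (𝓝[>] 0) (𝓝 0) := by
      rw [huv]
      exact (Continuous.tendsto' (by fun_prop) 0 0 (by simp)).mono_left nhdsWithin_le_nhds
    have hinfty :
        Tendsto (fun t : ℝ ↦ (t : ℂ) ^ (n + 1) * (-cexp (-(c * t)) / c)) atTop (𝓝 0) := by
      rw [huv]
      simpa using (tendsto_ofReal_pow_mul_cexp_neg_mul_atTop (n + 1) hc).const_mul (-c⁻¹)
    have hparts := integral_Ioi_mul_deriv_eq_deriv_mul (fun t _ ↦ hu t) (fun t _ ↦ hv t)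
      (integrableOn_ofReal_pow_mul_cexp_neg_mul_Ioi (n + 1) hc)
      (by rw [Pi.mul_def, hu'v]
          exact (integrableOn_ofReal_pow_mul_cexp_neg_mul_Ioi n hc).const_mul _)
      hzero hinfty
    rw [hparts, hu'v, integral_const_mul, ih, Nat.factorial_succ]
    push_cast
    field_simp
    ring

end Laplace

lemma integrable_inv_ofReal_add_mul_I_pow {a : ℝ} (ha : 0 < a) {n : ℕ} (hn : 2 ≤ n) :
    Integrable fun t : ℝ ↦ (((a : ℂ) + t * I) ^ n)⁻¹ := by
  have hdom : Integrable fun t : ℝ ↦ (a ^ n)⁻¹ * (1 + (t / a) ^ 2)⁻¹ :=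
    (integrable_inv_one_add_sq.comp_div ha.ne').const_mul _
  refine hdom.mono' (by fun_prop) (ae_of_all _ fun t ↦ ?_)
  set r := ‖(a : ℂ) + t * I‖
  have har : a ≤ r := by simpa [abs_of_pos ha] using abs_re_le_norm ((a : ℂ) + t * I)
  have hr2 : r ^ 2 = a ^ 2 + t ^ 2 := by rw [Complex.sq_norm, normSq_add_mul_I]
  have hr : 0 < r := ha.trans_le har
  obtain ⟨m, rfl⟩ := Nat.exists_eq_add_of_le' hn
  calc ‖(((a : ℂ) + t * I) ^ (m + 2))⁻¹‖ = (r ^ m * r ^ 2)⁻¹ := by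
        rw [norm_inv, norm_pow, pow_add]
    _ ≤ (a ^ m * (a ^ 2 + t ^ 2))⁻¹ := by rw [← hr2]; gcongr
    _ = (a ^ (m + 2))⁻¹ * (1 + (t / a) ^ 2)⁻¹ := by field_simp; ring

noncomputable def truncPowExp (n : ℕ) (c : ℂ) : ℝ → ℂ :=
  indicator (Ioi 0) fun u ↦ (u : ℂ) ^ n * cexp (-(c * u))

section truncPowExp

variable {c : ℂ}

lemma integrable_truncPowExp (n : ℕ) (hc : 0 < c.re) : Integrable (truncPowExp n c) :=
  (integrable_indicator_iff measurableSet_Ioi).2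
    (integrableOn_ofReal_pow_mul_cexp_neg_mul_Ioi n hc)

lemma continuous_truncPowExp {n : ℕ} (hn : n ≠ 0) (c : ℂ) : Continuous (truncPowExp n c) := by
  have : truncPowExp n c = fun u : ℝ ↦ (u : ℂ) ^ (n - 1) * (max u 0 : ℝ) * cexp (-(c * u)) := by
    ext u
    rcases lt_or_ge 0 u with hu | hu
    · rw [truncPowExp, indicator_of_mem (mem_Ioi.2 hu), max_eq_left hu.le, ← pow_succ,
        Nat.sub_add_cancel (Nat.pos_of_ne_zero hn)]
    · rw [truncPowExp, indicator_of_notMem (notMem_Ioi.2 hu), max_eq_right hu]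
      simp
  rw [this]
  fun_prop

lemma fourier_truncPowExp (n : ℕ) (hc : 0 < c.re) (ξ : ℝ) :
    𝓕 (truncPowExp n c) ξ = n.factorial / (c + (2 * π * ξ : ℝ) * I) ^ (n + 1) := by
  rw [Real.fourier_real_eq_integral_exp_smul,
    ← integral_ofReal_pow_mul_cexp_neg_mul_Ioi n (by simpa), ← integral_indicator measurableSet_Ioi]
  congr 1 with u
  rcases lt_or_ge 0 u with hu | hu
  · rw [truncPowExp, indicator_of_mem (mem_Ioi.2 hu), indicator_of_mem (mem_Ioi.2 hu),
      smul_eq_mul, mul_left_comm, ← Complex.exp_add]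
    push_cast
    ring_nf
  · simp [truncPowExp, indicator_of_notMem (notMem_Ioi.2 hu)]

lemma integrable_fourier_truncPowExp {n : ℕ} (hn : n ≠ 0) (hc : 0 < c.re) :
    Integrable (𝓕 (truncPowExp n c)) := by
  have h := (((integrable_inv_ofReal_add_mul_I_pow hc (n := n + 1) (by omega)).comp_add_right
    c.im).comp_mul_left' (two_pi_pos.ne')).const_mul (n.factorial : ℂ)
  refine h.congr (ae_of_all _ fun ξ ↦ ?_)
  simp only [fourier_truncPowExp n hc, div_eq_mul_inv]
  congr 3
  apply Complex.ext <;> simp [add_comm]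

theorem integral_cexp_mul_I_mul_div_pow_eq_truncPowExp {n : ℕ} (hn : n ≠ 0) (hc : 0 < c.re)
    (x : ℝ) :
    ∫ t : ℝ, cexp (x * t * I) * n.factorial / (c + t * I) ^ (n + 1)
      = 2 * π * truncPowExp n c x := by
  set G : ℝ → ℂ := fun t ↦ cexp (x * t * I) * n.factorial / (c + t * I) ^ (n + 1)
  have hinv := (integrable_truncPowExp n hc).fourierInv_fourier_eq
    (integrable_fourier_truncPowExp hn hc) (continuous_truncPowExp hn c).continuousAt (v := x)
  have hG : ∫ ξ : ℝ, G (2 * π * ξ) = truncPowExp n c x := by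
    rw [← hinv, fourierInv_eq']
    congr 1 with ξ
    simp only [G, fourier_truncPowExp n hc, smul_eq_mul, mul_div_assoc, RCLike.inner_apply,
      conj_trivial]
    push_cast
    ring_nf
  rw [Measure.integral_comp_mul_left, abs_of_pos (inv_pos.2 two_pi_pos)] at hG
  rw [← hG, Complex.real_smul]
  push_cast
  field_simp

end truncPowExp

-- The line is parametrized by `ω = a + it`, so that `dω / (2πi) = dt / (2π)`.
/-- Walfisz's formula: `(1/(2πi)) ∫_{(a)} e^{xω} ω^{-(ℓ+1)} dω` equals `x^ℓ/ℓ!` for `x > 0`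
and `0` for `x ≤ 0`.  With `ω = a + it`, `dω = i dt`, this is
`(1/(2π)) ∫_ℝ e^{x(a+it)} (a+it)^{-(ℓ+1)} dt`. -/
theorem walfisz_formula (ℓ : ℕ) (hl : 1 ≤ ℓ) (a : ℝ) (ha : 0 < a) (x : ℝ) :
    (1 / (2 * Real.pi) : ℂ) *
      ∫ t : ℝ, Complex.exp ((x : ℂ) * ((a : ℂ) + t * Complex.I)) *
        ((a : ℂ) + t * Complex.I) ^ (-(ℓ + 1 : ℂ))
    = if 0 < x then (x : ℂ) ^ ℓ / (Nat.factorial ℓ : ℂ) else 0 := by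
  have hintegrand (t : ℝ) : cexp (x * (a + t * I)) * (a + t * I) ^ (-(ℓ + 1 : ℂ))
      = cexp (a * x) / ℓ.factorial * (cexp (x * t * I) * ℓ.factorial / (a + t * I) ^ (ℓ + 1)) := by
    rw [show (-(ℓ + 1 : ℂ)) = -((ℓ + 1 : ℕ) : ℂ) by push_cast; rfl, cpow_neg, cpow_natCast]
    have hne : (a : ℂ) + t * I ≠ 0 := fun h ↦ ha.ne' (by simpa using congrArg re h)
    have hfac : (ℓ.factorial : ℂ) ≠ 0 := Nat.cast_ne_zero.2 ℓ.factorial_ne_zero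
    rw [mul_add, Complex.exp_add]
    field_simp
  simp_rw [hintegrand, integral_const_mul,
    integral_cexp_mul_I_mul_div_pow_eq_truncPowExp (by omega : ℓ ≠ 0) (c := a) (by simpa) x]
  split_ifs with hx
  · rw [truncPowExp, indicator_of_mem (mem_Ioi.2 hx), Complex.exp_neg]
    field_simp
  · rw [truncPowExp, indicator_of_notMem (notMem_Ioi.2 (not_lt.1 hx))]
    simp
end

section
/- Let Λ be the von Mangoldt function, r_G(n) = ∑_{m₁+m₂=n} Λ(m₁)Λ(m₂), S̃(z) = ∑_{m≥1} Λ(m)e^{-mz}, N a positive integer, a > 0 and k > 0. Then ∑_{n≤N} r_G(n)(N-n)^k/Γ(k+1) = (1/(2πi)) ∫ over the line Re(z)=a of e^{Nz} z^{-k-1} S̃(z)² dz. -/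
/-!
Squaring `S̃(z) = ∑ Λ(m) e^{-mz}` by the Cauchy product gives `∑ r_G(n) e^{-nz}`, which converges
absolutely on `Re z = a`, so the line integral may be taken term by term. Each term is the
Perron-type integral `(1/2π) ∫ e^{x(a+it)} (a+it)^{-k-1} dt = x₊^k / Γ(k+1)` with `x = N - n`,
which is Fourier inversion for `y ↦ y₊^k e^{-ay}`: its Fourier transform is
`Γ(k+1) (a + 2πiξ)^{-k-1}`, the Gamma integral with complex rate, obtained from the real rate by
analytic continuation.
-/

open Complex Real ArithmeticFunction MeasureTheory Set Filter Topology FourierTransform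

lemma continuousOn_cpow_mul_exp_neg_mul (a b : ℂ) :
    ContinuousOn (fun t : ℝ => (t : ℂ) ^ (a - 1) * cexp (-(b * t))) (Ioi 0) := fun t ht =>
  ((continuousAt_ofReal_cpow_const t _ (Or.inr (ne_of_gt ht))).mul (by fun_prop)).continuousWithinAt

lemma norm_cpow_mul_exp_neg_mul {t : ℝ} (ht : 0 < t) (a b : ℂ) :
    ‖(t : ℂ) ^ a * cexp (-(b * t))‖ = t ^ a.re * rexp (-(b.re * t)) := by
  simp [norm_cpow_eq_rpow_re_of_pos ht, Complex.norm_exp]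

lemma integrableOn_cpow_mul_exp_neg_mul {a b : ℂ} (ha : 0 < a.re) (hb : 0 < b.re) :
    IntegrableOn (fun t : ℝ => (t : ℂ) ^ (a - 1) * cexp (-(b * t))) (Ioi 0) := by
  refine (integrableOn_rpow_mul_exp_neg_mul_rpow (s := a.re - 1) (by linarith) one_pos hb).mono'
    ((continuousOn_cpow_mul_exp_neg_mul a b).aestronglyMeasurable measurableSet_Ioi) ?_
  filter_upwards [ae_restrict_mem measurableSet_Ioi] with t (ht : 0 < t)
  rw [norm_cpow_mul_exp_neg_mul ht, sub_re, one_re, Real.rpow_one, neg_mul]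

lemma differentiableOn_integral_cpow_mul_exp_neg_mul {a : ℂ} (ha : 0 < a.re) :
    DifferentiableOn ℂ (fun b : ℂ => ∫ t in Ioi (0 : ℝ), (t : ℂ) ^ (a - 1) * cexp (-(b * t)))
      {b | 0 < b.re} := by
  intro b₀ (hb₀ : 0 < b₀.re)
  have hε : 0 < b₀.re / 2 := by positivity
  have hre : ∀ b ∈ Metric.ball b₀ (b₀.re / 2), b₀.re / 2 ≤ b.re := fun b hb => by
    have := (abs_re_le_norm (b - b₀)).trans (mem_ball_iff_norm.mp hb).le
    rw [sub_re] at this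
    linarith [neg_abs_le (b.re - b₀.re)]
  -- the exponent `a + 1 - 1` lets the two lemmas above serve for the derivative and its bound
  refine (hasDerivAt_integral_of_dominated_loc_of_deriv_le (μ := volume.restrict (Ioi (0 : ℝ)))
    (F := fun b (t : ℝ) => (t : ℂ) ^ (a - 1) * cexp (-(b * t)))
    (F' := fun b (t : ℝ) => -((t : ℂ) ^ (a + 1 - 1) * cexp (-(b * t))))
    (bound := fun t : ℝ => ‖(t : ℂ) ^ (a + 1 - 1) * cexp (-((b₀.re / 2 : ℝ) * t))‖)
    (Metric.ball_mem_nhds b₀ hε)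
    (Eventually.of_forall fun b =>
      (continuousOn_cpow_mul_exp_neg_mul a b).aestronglyMeasurable measurableSet_Ioi)
    (integrableOn_cpow_mul_exp_neg_mul ha hb₀)
    ((continuousOn_cpow_mul_exp_neg_mul (a + 1) b₀).neg.aestronglyMeasurable measurableSet_Ioi)
    ?_ (integrableOn_cpow_mul_exp_neg_mul (by simp; linarith) (by simpa using hε)).norm
    ?_).2.differentiableAt.differentiableWithinAt
  · filter_upwards [ae_restrict_mem measurableSet_Ioi] with t (ht : 0 < t) b hb
    rw [norm_neg, norm_cpow_mul_exp_neg_mul ht, norm_cpow_mul_exp_neg_mul ht]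
    refine mul_le_mul_of_nonneg_left ?_ (by positivity)
    rw [Real.exp_le_exp, ofReal_re]
    nlinarith [hre b hb]
  · filter_upwards [ae_restrict_mem measurableSet_Ioi] with t (ht : 0 < t) b _
    have hpow : (t : ℂ) ^ (a + 1 - 1) = (t : ℂ) ^ (a - 1) * t := by
      rw [add_sub_cancel_right, cpow_sub _ _ (by exact_mod_cast ht.ne'), cpow_one,
        div_mul_cancel₀ _ (by exact_mod_cast ht.ne')]
    have := ((hasDerivAt_id b).mul_const (t : ℂ)).neg.cexp.const_mul ((t : ℂ) ^ (a - 1))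
    exact this.congr_deriv (by rw [hpow]; simp only [Pi.neg_apply, id]; ring)

lemma integral_cpow_mul_exp_neg_mul_Ioi_of_re_pos {a b : ℂ} (ha : 0 < a.re) (hb : 0 < b.re) :
    ∫ t in Ioi (0 : ℝ), (t : ℂ) ^ (a - 1) * cexp (-(b * t)) = Gamma a * b ^ (-a) := by
  have hU : IsPreconnected {b : ℂ | 0 < b.re} := (convex_halfSpace_re_gt 0).isPreconnected
  have hUo : IsOpen {b : ℂ | 0 < b.re} := isOpen_lt continuous_const continuous_re
  have hpow : DifferentiableOn ℂ (fun b : ℂ => b ^ (-a)) {b | 0 < b.re} := fun b hb =>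
    (differentiableAt_id.cpow_const (Or.inl hb)).differentiableWithinAt
  refine AnalyticOnNhd.eqOn_of_preconnected_of_frequently_eq
    ((differentiableOn_integral_cpow_mul_exp_neg_mul ha).analyticOnNhd hUo)
    ((hpow.const_mul (Gamma a)).analyticOnNhd hUo)
    hU (by simp : (0 : ℝ) < (1 : ℂ).re) ?_ hb
  have hreal : Tendsto ((↑) : ℝ → ℂ) (𝓝[≠] 1) (𝓝[≠] 1) :=
    tendsto_nhdsWithin_of_tendsto_nhds_of_eventually_within _
      ((continuous_ofReal.tendsto' 1 1 ofReal_one).mono_left nhdsWithin_le_nhds)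
      (eventually_nhdsWithin_of_forall fun x hx => by simpa using hx)
  refine hreal.frequently (Eventually.frequently ?_)
  filter_upwards [nhdsWithin_le_nhds (Ioi_mem_nhds one_pos)] with r (hr : 0 < r)
  rw [integral_cpow_mul_exp_neg_mul_Ioi ha hr, one_div,
    inv_cpow _ _ (by rw [arg_ofReal_of_nonneg hr.le]; exact pi_ne_zero.symm), ← cpow_neg, mul_comm]

lemma integrable_norm_add_mul_I_rpow_neg {a r : ℝ} (ha : a ≠ 0) (hr : 1 < r) :
    Integrable fun t : ℝ => ‖(a : ℂ) + t * I‖ ^ (-r) := by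
  refine (((integrable_rpow_neg_one_add_norm_sq (E := ℝ) (μ := volume) (r := r)
    (by simpa using hr)).comp_div ha).const_mul ((a ^ 2) ^ (-r / 2))).congr
    (Eventually.of_forall fun t => ?_)
  have hsq : a ^ 2 + t ^ 2 = a ^ 2 * (1 + ‖t / a‖ ^ 2) := by
    rw [Real.norm_eq_abs, sq_abs]; field_simp
  simp only
  rw [norm_add_mul_I, Real.sqrt_eq_rpow, ← Real.rpow_mul (by positivity), hsq,
    Real.mul_rpow (by positivity) (by positivity)]
  ring_nf

lemma continuous_cpow_add_mul_I {a : ℝ} (ha : 0 < a) (s : ℂ) :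
    Continuous fun t : ℝ => ((a : ℂ) + t * I) ^ s :=
  (by fun_prop : Continuous fun t : ℝ => (a : ℂ) + t * I).cpow continuous_const fun t => by
    simp [mem_slitPlane_iff, ha]

noncomputable def gammaKernel (k a : ℝ) (y : ℝ) : ℂ :=
  ((max y 0 : ℝ) : ℂ) ^ (k : ℂ) * cexp (-(a * y))

section gammaKernel

variable {k a : ℝ}

lemma gammaKernel_of_nonpos (hk : k ≠ 0) {y : ℝ} (hy : y ≤ 0) : gammaKernel k a y = 0 := by
  simp [gammaKernel, max_eq_right hy, hk]

lemma gammaKernel_of_pos {y : ℝ} (hy : 0 < y) :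
    gammaKernel k a y = (y : ℂ) ^ (k : ℂ) * cexp (-(a * y)) := by
  simp [gammaKernel, max_eq_left hy.le]

lemma continuous_gammaKernel (hk : 0 < k) : Continuous (gammaKernel k a) := by
  refine Continuous.mul (continuous_iff_continuousAt.2 fun y => ?_) (by fun_prop)
  exact (continuousAt_ofReal_cpow_const _ _ (Or.inl (by simpa))).comp
    (continuous_id.max continuous_const).continuousAt

lemma integrable_gammaKernel (hk : 0 < k) (ha : 0 < a) : Integrable (gammaKernel k a) := by
  refine IntegrableOn.integrable_of_forall_notMem_eq_zero (s := Ioi 0) ?_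
    fun y hy => gammaKernel_of_nonpos hk.ne' (not_lt.mp hy)
  refine (integrableOn_cpow_mul_exp_neg_mul (a := k + 1) (b := a) (by simp; linarith)
    (by simpa)).congr_fun (fun y hy => ?_) measurableSet_Ioi
  rw [gammaKernel_of_pos hy, add_sub_cancel_right]

lemma fourier_gammaKernel (hk : 0 < k) (ha : 0 < a) (ξ : ℝ) :
    𝓕 (gammaKernel k a) ξ
      = Complex.Gamma (k + 1) * (a + (2 * π * ξ : ℝ) * I) ^ (-(k : ℂ) - 1) := by
  rw [Real.fourier_real_eq, ← setIntegral_eq_integral_of_forall_compl_eq_zero (s := Ioi 0)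
    fun v hv => by rw [gammaKernel_of_nonpos hk.ne' (not_lt.mp hv), smul_zero]]
  have hre : 0 < ((a : ℂ) + (2 * π * ξ : ℝ) * I).re := by simpa
  have hintegrand : EqOn (fun v : ℝ => 𝐞 (-(v * ξ)) • gammaKernel k a v)
      (fun v : ℝ => (v : ℂ) ^ ((k + 1 : ℂ) - 1) * cexp (-((a + (2 * π * ξ : ℝ) * I) * v)))
      (Ioi 0) := fun v hv => by
    dsimp only
    rw [gammaKernel_of_pos hv, Circle.smul_def, Real.fourierChar_apply, smul_eq_mul,
      add_sub_cancel_right, mul_left_comm, ← Complex.exp_add]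
    congr 2
    push_cast
    ring
  rw [setIntegral_congr_fun measurableSet_Ioi hintegrand,
    integral_cpow_mul_exp_neg_mul_Ioi_of_re_pos (by simp; linarith) hre, neg_add']

lemma integrable_fourier_gammaKernel (hk : 0 < k) (ha : 0 < a) :
    Integrable (𝓕 (gammaKernel k a)) := by
  have hweight := ((integrable_norm_add_mul_I_rpow_neg ha.ne' (r := k + 1)
    (by linarith)).comp_mul_left' (by positivity : 2 * π ≠ 0)).const_mul ‖Complex.Gamma (k + 1)‖
  rw [show 𝓕 (gammaKernel k a) = _ from funext (fourier_gammaKernel hk ha)]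
  refine hweight.mono' (continuous_const.mul ((continuous_cpow_add_mul_I ha _).comp
    (by fun_prop : Continuous fun ξ : ℝ => 2 * π * ξ))).aestronglyMeasurable
    (Eventually.of_forall fun ξ => ?_)
  rw [norm_mul, show -(k : ℂ) - 1 = ((-(k + 1) : ℝ) : ℂ) by push_cast; ring, norm_cpow_real]

end gammaKernel

theorem integral_exp_mul_cpow_neg_sub_one {a k : ℝ} (ha : 0 < a) (hk : 0 < k) (x : ℝ) :
    ∫ t : ℝ, cexp (x * (a + t * I)) * (a + t * I) ^ (-(k : ℂ) - 1)
      = 2 * π * ((max x 0 ^ k / Real.Gamma (k + 1) : ℝ) : ℂ) := by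
  have hinv := (integrable_gammaKernel hk ha).fourierInv_fourier_eq
    (integrable_fourier_gammaKernel hk ha) (continuous_gammaKernel hk).continuousAt (v := x)
  rw [Real.fourierInv_eq'] at hinv
  simp only [RCLike.inner_apply, conj_trivial, smul_eq_mul] at hinv
  have hΓ : Complex.Gamma (k + 1) = Real.Gamma (k + 1) := by
    exact_mod_cast Complex.Gamma_ofReal _
  have hΓ0 : Complex.Gamma (k + 1) ≠ 0 := Complex.Gamma_ne_zero_of_re_pos (by simp; linarith)
  -- the integrand at `t = 2πξ` is a multiple of the inverse Fourier integrand of `gammaKernel k a`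
  have hscaled : ∀ ξ : ℝ, cexp (x * (a + (2 * π * ξ : ℝ) * I))
        * (a + (2 * π * ξ : ℝ) * I) ^ (-(k : ℂ) - 1)
      = cexp (x * a) * (Complex.Gamma (k + 1))⁻¹ *
        (cexp ((2 * π * (x * ξ) : ℝ) * I) * 𝓕 (gammaKernel k a) ξ) := fun ξ => by
    rw [fourier_gammaKernel hk ha, show (x : ℂ) * (a + (2 * π * ξ : ℝ) * I)
      = x * a + (2 * π * (x * ξ) : ℝ) * I by push_cast; ring, Complex.exp_add]
    field_simp
  have hchange := Measure.integral_comp_mul_left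
    (fun t : ℝ => cexp (x * (a + t * I)) * (a + t * I) ^ (-(k : ℂ) - 1)) (2 * π)
  simp only [hscaled, integral_const_mul, hinv, abs_inv, abs_of_pos two_pi_pos] at hchange
  rw [eq_inv_smul_iff₀ (by positivity)] at hchange
  have hexp : cexp (x * a) * cexp (-(a * x)) = 1 := by
    rw [← Complex.exp_add]; ring_nf; exact exp_zero
  rw [← hchange, gammaKernel, Complex.real_smul, ← ofReal_cpow (le_max_right x 0), hΓ]
  push_cast
  linear_combination (2 * π * ((max x 0 ^ k : ℝ) : ℂ) / Real.Gamma (k + 1)) * hexp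

lemma norm_exp_mul_cpow_neg_sub_one (a k y t : ℝ) :
    ‖cexp (y * (a + t * I)) * (a + t * I) ^ (-(k : ℂ) - 1)‖
      = rexp (y * a) * ‖(a : ℂ) + t * I‖ ^ (-(k + 1)) := by
  rw [norm_mul, Complex.norm_exp, show -(k : ℂ) - 1 = ((-(k + 1) : ℝ) : ℂ) by push_cast; ring,
    norm_cpow_real]
  simp

lemma integrable_exp_mul_cpow_neg_sub_one {a k : ℝ} (ha : 0 < a) (hk : 0 < k) (y : ℝ) :
    Integrable fun t : ℝ => cexp (y * (a + t * I)) * (a + t * I) ^ (-(k : ℂ) - 1) :=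
  ((integrable_norm_add_mul_I_rpow_neg ha.ne' (r := k + 1) (by linarith)).const_mul
    (rexp (y * a))).mono' ((by fun_prop : Continuous fun t : ℝ => cexp (y * (a + t * I))).mul
      (continuous_cpow_add_mul_I ha _)).aestronglyMeasurable
    (Eventually.of_forall fun t => (norm_exp_mul_cpow_neg_sub_one a k y t).le)

theorem integral_exp_mul_cpow_mul_tsum {a k : ℝ} (ha : 0 < a) (hk : 0 < k) (c : ℕ → ℂ)
    (hc : Summable fun n : ℕ => ‖c n * cexp (-n * a)‖) (x : ℝ) :
    ∫ t : ℝ, cexp (x * (a + t * I)) * (a + t * I) ^ (-(k : ℂ) - 1)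
        * ∑' n : ℕ, c n * cexp (-n * (a + t * I))
      = 2 * π * ∑' n : ℕ, c n * ((max (x - n) 0 ^ k / Real.Gamma (k + 1) : ℝ) : ℂ) := by
  set F : ℕ → ℝ → ℂ := fun n t =>
    c n * (cexp ((x - n : ℝ) * (a + t * I)) * (a + t * I) ^ (-(k : ℂ) - 1))
  have hF : ∀ t : ℝ, cexp (x * (a + t * I)) * (a + t * I) ^ (-(k : ℂ) - 1)
      * ∑' n : ℕ, c n * cexp (-n * (a + t * I)) = ∑' n, F n t := fun t => by
    rw [← tsum_mul_left]
    refine tsum_congr fun n => ?_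
    simp only [F]
    rw [show ((x - n : ℝ) : ℂ) * (a + t * I) = x * (a + t * I) + -n * (a + t * I) by
      push_cast; ring, Complex.exp_add]
    ring
  have hFint : ∀ n, Integrable (F n) := fun n =>
    (integrable_exp_mul_cpow_neg_sub_one ha hk _).const_mul _
  have hFnorm : ∀ n, ∫ t, ‖F n t‖ = ‖c n * cexp (-n * a)‖ *
      (rexp (x * a) * ∫ t : ℝ, ‖(a : ℂ) + t * I‖ ^ (-(k + 1))) := fun n => by
    simp only [F, norm_mul (c n), norm_exp_mul_cpow_neg_sub_one, integral_const_mul,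
      Complex.norm_exp, show (-(n : ℂ) * a).re = -(n * a) by simp]
    rw [show (x - n) * a = x * a + -(n * a) by ring, Real.exp_add]
    ring
  simp only [hF, ← integral_tsum_of_summable_integral_norm hFint
    ((funext hFnorm).symm ▸ hc.mul_right _), F, integral_const_mul,
    integral_exp_mul_cpow_neg_sub_one ha hk, ← tsum_mul_left]
  exact tsum_congr fun n => by ring

section CauchySquare

open Finset

variable {c : ℕ → ℂ} {z : ℂ}

lemma sum_antidiagonal_mul_exp_neg_mul (c : ℕ → ℂ) (z : ℂ) (n : ℕ) :
    ∑ p ∈ antidiagonal n, c p.1 * cexp (-p.1 * z) * (c p.2 * cexp (-p.2 * z))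
      = (∑ p ∈ antidiagonal n, c p.1 * c p.2) * cexp (-n * z) := by
  rw [sum_mul]
  refine sum_congr rfl fun p hp => ?_
  rw [← mem_antidiagonal.mp hp, mul_mul_mul_comm, ← Complex.exp_add]
  push_cast
  ring_nf

lemma summable_norm_sum_antidiagonal_mul_exp
    (hc : Summable fun m : ℕ => ‖c m * cexp (-m * z)‖) :
    Summable fun n : ℕ => ‖(∑ p ∈ antidiagonal n, c p.1 * c p.2) * cexp (-n * z)‖ := by
  simpa only [sum_antidiagonal_mul_exp_neg_mul] using
    summable_norm_sum_mul_antidiagonal_of_summable_norm hc hc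

lemma tsum_mul_exp_sq (hc : Summable fun m : ℕ => ‖c m * cexp (-m * z)‖) :
    (∑' m : ℕ, c m * cexp (-m * z)) ^ 2
      = ∑' n : ℕ, (∑ p ∈ antidiagonal n, c p.1 * c p.2) * cexp (-n * z) := by
  rw [sq, tsum_mul_tsum_eq_tsum_sum_antidiagonal_of_summable_norm hc hc]
  simp only [sum_antidiagonal_mul_exp_neg_mul]

end CauchySquare

lemma summable_norm_vonMangoldt_mul_exp {z : ℂ} (hz : 0 < z.re) :
    Summable fun m : ℕ => ‖(Λ m : ℂ) * cexp (-m * z)‖ := by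
  have hr : ‖rexp (-z.re)‖ < 1 := by
    rw [Real.norm_of_nonneg (Real.exp_pos _).le, Real.exp_lt_one_iff]; linarith
  refine (summable_pow_mul_geometric_of_norm_lt_one 1 hr).of_nonneg_of_le
    (fun _ => norm_nonneg _) fun m => ?_
  rw [norm_mul, Complex.norm_real, Real.norm_of_nonneg vonMangoldt_nonneg, Complex.norm_exp,
    ← Real.exp_nat_mul, pow_one]
  refine mul_le_mul (vonMangoldt_le_log.trans (Real.log_le_self (Nat.cast_nonneg _)))
    (le_of_eq ?_) (Real.exp_pos _).le (Nat.cast_nonneg _)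
  simp

theorem fundamental_relation_general (N : ℕ) (a k : ℝ) (ha : 0 < a) (hk : 0 < k) :
    ((∑ n ∈ Finset.range (N + 1),
        (∑ p ∈ Finset.HasAntidiagonal.antidiagonal n, (Λ p.1 : ℝ) * Λ p.2)
          * ((N : ℝ) - n) ^ k / Real.Gamma (k + 1) : ℝ) : ℂ)
      = (1 / (2 * Real.pi) : ℂ) *
          ∫ t : ℝ, Complex.exp ((N : ℂ) * ((a : ℂ) + t * Complex.I))
            * ((a : ℂ) + t * Complex.I) ^ (-(k : ℂ) - 1)
            * (∑' m : ℕ, (Λ m : ℂ) * Complex.exp (-(m : ℂ) * ((a : ℂ) + t * Complex.I))) ^ 2 := by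
  have hline : ∀ t : ℝ, 0 < ((a : ℂ) + t * I).re := by simpa
  simp only [tsum_mul_exp_sq (summable_norm_vonMangoldt_mul_exp (hline _))]
  have hseries := integral_exp_mul_cpow_mul_tsum ha hk _
    (summable_norm_sum_antidiagonal_mul_exp (summable_norm_vonMangoldt_mul_exp (by simpa))) N
  rw [ofReal_natCast] at hseries
  rw [hseries, tsum_eq_sum (s := Finset.range (N + 1)) fun n hn => ?_]
  · rw [one_div, ← mul_assoc, inv_mul_cancel₀ (by simp [pi_ne_zero]), one_mul]
    push_cast
    refine Finset.sum_congr rfl fun n hn => ?_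
    rw [max_eq_left (sub_nonneg.mpr (by exact_mod_cast Finset.mem_range_succ_iff.mp hn))]
    ring
  · have hNn : (N : ℝ) ≤ n := by
      exact_mod_cast (not_le.mp (Finset.mem_range_succ_iff.not.mp hn)).le
    rw [max_eq_right (sub_nonpos.mpr hNn), Real.zero_rpow hk.ne']
    simp

/-- The fundamental relation: for `N ≥ 1`, `a > 0`, `k > 0`,
`∑_{n ≤ N} r_G(n) (N-n)^k / Γ(k+1) = (1/(2πi)) ∫_{(a)} e^{Nz} z^{-k-1} S̃(z)² dz`,
with the line parametrized as `z = a + it`. -/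
theorem fundamental_relation (N : ℕ) (hN : 0 < N) (a k : ℝ) (ha : 0 < a) (hk : 0 < k) :
    ((∑ n ∈ Finset.range (N + 1),
        (∑ p ∈ Finset.HasAntidiagonal.antidiagonal n, (Λ p.1 : ℝ) * Λ p.2)
          * ((N : ℝ) - n) ^ k / Real.Gamma (k + 1) : ℝ) : ℂ)
      = (1 / (2 * Real.pi) : ℂ) *
          ∫ t : ℝ, Complex.exp ((N : ℂ) * ((a : ℂ) + t * Complex.I))
            * ((a : ℂ) + t * Complex.I) ^ (-(k : ℂ) - 1)
            * (∑' m : ℕ, (Λ m : ℂ) * Complex.exp (-(m : ℂ) * ((a : ℂ) + t * Complex.I))) ^ 2 :=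
  fundamental_relation_general N a k ha hk
end

section
/- Let ρ ∈ ℂ with 0 < Re(ρ) < 1, N a positive integer, and k > 0. Then (1/(2πi)) ∫ over the line Re(z)=1/N of e^{Nz} z^{-k-2-ρ} dz = N^{k+1+ρ}/Γ(ρ+k+2). -/
open Complex Real MeasureTheory Set Filter Topology

/-!
On the line `Re s = σ` the integral is a Fourier inversion integral. The one-sided function
`g u = 𝟙_{u > 0} u^(a-1) e^(-σu)` has Fourier transform `ξ ↦ Γ(a) (σ + 2πiξ)^(-a)`: this is the
Laplace transform of `u^(a-1)` at a complex point, which follows from the real Gamma integral by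
analytic continuation over the right half-plane. For `Re a > 1` the transform is integrable, so
Fourier inversion at `u = x` gives
`(1/2π) ∫ e^(x(σ+it)) (σ+it)^(-a) dt = e^(σx) g(x) = x^(a-1)/Γ(a)`.
The theorem is the case `a = ρ + k + 2`, `σ = 1/N`, `x = N`.
-/

section Laplace

lemma norm_cpow_mul_cexp_neg_mul {t : ℝ} (ht : 0 < t) (a z : ℂ) :
    ‖(t : ℂ) ^ (a - 1) * cexp (-(z * t))‖ = t ^ (a.re - 1) * Real.exp (-z.re * t) := by
  rw [norm_mul, norm_cpow_eq_rpow_re_of_pos ht, Complex.norm_exp]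
  simp

lemma continuousOn_cpow_mul_cexp_neg_mul (a z : ℂ) :
    ContinuousOn (fun t : ℝ ↦ (t : ℂ) ^ (a - 1) * cexp (-(z * t))) (Ioi 0) := fun t ht ↦
  (((continuousAt_cpow_const (ofReal_mem_slitPlane.2 ht)).comp
    continuous_ofReal.continuousAt).mul (by fun_prop)).continuousWithinAt

variable {a z : ℂ}

lemma integrableOn_cpow_mul_cexp_neg_mul_Ioi (ha : 0 < a.re) (hz : 0 < z.re) :
    IntegrableOn (fun t : ℝ ↦ (t : ℂ) ^ (a - 1) * cexp (-(z * t))) (Ioi 0) := by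
  have hbound := integrableOn_rpow_mul_exp_neg_mul_rpow (p := 1) (s := a.re - 1) (by linarith)
    one_pos hz
  refine hbound.mono'
    ((continuousOn_cpow_mul_cexp_neg_mul a z).aestronglyMeasurable measurableSet_Ioi) ?_
  filter_upwards [ae_restrict_mem measurableSet_Ioi] with t ht
  rw [norm_cpow_mul_cexp_neg_mul ht, Real.rpow_one]

lemma differentiableOn_integral_cpow_mul_cexp_neg_mul_Ioi (ha : 0 < a.re) :
    DifferentiableOn ℂ (fun z ↦ ∫ t : ℝ in Ioi 0, (t : ℂ) ^ (a - 1) * cexp (-(z * t)))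
      {z | 0 < z.re} := by
  intro z₀ (hz₀ : 0 < z₀.re)
  have hre : ∀ z ∈ Metric.ball z₀ (z₀.re / 2), z₀.re / 2 < z.re := fun z hz ↦ by
    have := (abs_re_le_norm (z - z₀)).trans_lt (mem_ball_iff_norm.mp hz)
    rw [sub_re] at this
    linarith [(abs_lt.mp this).1]
  have hbound_int : IntegrableOn (fun t : ℝ ↦ t ^ a.re * Real.exp (-(z₀.re / 2) * t)) (Ioi 0) := by
    simpa only [Real.rpow_one] using
      integrableOn_rpow_mul_exp_neg_mul_rpow (p := 1) (by linarith) one_pos (half_pos hz₀)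
  have hF'_le : ∀ᵐ t : ℝ ∂volume.restrict (Ioi 0), ∀ z ∈ Metric.ball z₀ (z₀.re / 2),
      ‖-(t : ℂ) * ((t : ℂ) ^ (a - 1) * cexp (-(z * t)))‖ ≤ t ^ a.re * Real.exp (-(z₀.re / 2) * t) := by
    filter_upwards [ae_restrict_mem measurableSet_Ioi] with t (ht : 0 < t) z hz
    rw [norm_mul, norm_neg, norm_real, Real.norm_of_nonneg ht.le, norm_cpow_mul_cexp_neg_mul ht,
      ← mul_assoc, ← Real.rpow_one_add' ht.le (by linarith), add_sub_cancel]
    gcongr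
    nlinarith [hre z hz]
  have hF' : ∀ᵐ t : ℝ ∂volume.restrict (Ioi 0), ∀ z ∈ Metric.ball z₀ (z₀.re / 2),
      HasDerivAt (fun z ↦ (t : ℂ) ^ (a - 1) * cexp (-(z * t)))
        (-(t : ℂ) * ((t : ℂ) ^ (a - 1) * cexp (-(z * t)))) z := by
    filter_upwards with t z _
    have h := ((hasDerivAt_mul_const (x := z) (t : ℂ)).fun_neg.cexp).const_mul ((t : ℂ) ^ (a - 1))
    exact h.congr_deriv (by ring)
  have hF_meas : ∀ z : ℂ, AEStronglyMeasurable (fun t : ℝ ↦ (t : ℂ) ^ (a - 1) * cexp (-(z * t)))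
      (volume.restrict (Ioi 0)) := fun z ↦
    (continuousOn_cpow_mul_cexp_neg_mul a z).aestronglyMeasurable measurableSet_Ioi
  have hF'_meas : AEStronglyMeasurable
      (fun t : ℝ ↦ -(t : ℂ) * ((t : ℂ) ^ (a - 1) * cexp (-(z₀ * t)))) (volume.restrict (Ioi 0)) :=
    (continuous_ofReal.neg.continuousOn.mul (continuousOn_cpow_mul_cexp_neg_mul a z₀)
      ).aestronglyMeasurable measurableSet_Ioi
  exact (hasDerivAt_integral_of_dominated_loc_of_deriv_le (Metric.ball_mem_nhds z₀ (half_pos hz₀))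
    (.of_forall hF_meas) (integrableOn_cpow_mul_cexp_neg_mul_Ioi ha hz₀) hF'_meas hF'_le hbound_int
    hF').2.differentiableAt.differentiableWithinAt

theorem integral_cpow_mul_cexp_neg_mul_Ioi (ha : 0 < a.re) (hz : 0 < z.re) :
    ∫ t : ℝ in Ioi 0, (t : ℂ) ^ (a - 1) * cexp (-(z * t)) = Gamma a * z ^ (-a) := by
  have hU : IsOpen {z : ℂ | 0 < z.re} := isOpen_lt continuous_const continuous_re
  have hG : DifferentiableOn ℂ (fun z : ℂ ↦ Gamma a * z ^ (-a)) {z | 0 < z.re} := fun z hz ↦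
    ((differentiableAt_id.cpow_const (Or.inl hz)).const_mul _).differentiableWithinAt
  have hreal : ∀ᶠ r : ℝ in 𝓝[≠] 1, ∫ t : ℝ in Ioi 0, (t : ℂ) ^ (a - 1) * cexp (-(r * t))
      = Gamma a * (r : ℂ) ^ (-a) := by
    filter_upwards [eventually_nhdsWithin_of_eventually_nhds (lt_mem_nhds one_pos)] with r hr
    rw [integral_cpow_mul_exp_neg_mul_Ioi ha hr, one_div,
      inv_cpow _ _ (by simpa [arg_ofReal_of_nonneg hr.le] using Real.pi_ne_zero.symm),
      ← cpow_neg, mul_comm]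
  have hofReal : Tendsto ((↑) : ℝ → ℂ) (𝓝[≠] 1) (𝓝[≠] 1) :=
    continuous_ofReal.continuousWithinAt.tendsto_nhdsWithin fun _ _ ↦ by simp_all
  exact ((differentiableOn_integral_cpow_mul_cexp_neg_mul_Ioi ha).analyticOnNhd hU
    ).eqOn_of_preconnected_of_frequently_eq (hG.analyticOnNhd hU)
    (convex_halfSpace_re_gt 0).isPreconnected (by simp) (hofReal.frequently hreal.frequently) hz

end Laplace

lemma norm_cpow_neg_le (z a : ℂ) : ‖z ^ (-a)‖ ≤ Real.exp (π * |a.im|) * ‖z‖ ^ (-a.re) := by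
  calc ‖z ^ (-a)‖ ≤ ‖z‖ ^ (-a).re / Real.exp (arg z * (-a).im) := norm_cpow_le z (-a)
    _ = Real.exp (arg z * a.im) * ‖z‖ ^ (-a.re) := by
      rw [neg_re, neg_im, mul_neg, Real.exp_neg, div_inv_eq_mul, mul_comm]
    _ ≤ Real.exp (π * |a.im|) * ‖z‖ ^ (-a.re) := by
      refine mul_le_mul_of_nonneg_right (Real.exp_le_exp.mpr ?_) (by positivity)
      calc arg z * a.im ≤ |arg z| * |a.im| := by rw [← abs_mul]; exact le_abs_self _
        _ ≤ π * |a.im| := by gcongr; exact abs_arg_le_pi z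

lemma integrable_cpow_neg_vertical {σ : ℝ} (hσ : 0 < σ) {a : ℂ} (ha : 1 < a.re) :
    Integrable (fun t : ℝ ↦ ((σ : ℂ) + t * I) ^ (-a)) := by
  set c := min σ 1 / 2
  have hc : 0 < c := by positivity
  have hnorm : ∀ t : ℝ, c * (1 + |t|) ≤ ‖(σ : ℂ) + t * I‖ := fun t ↦ by
    have hre := abs_re_le_norm ((σ : ℂ) + t * I)
    have him := abs_im_le_norm ((σ : ℂ) + t * I)
    simp only [add_re, ofReal_re, mul_re, I_re, I_im, ofReal_im, add_im, mul_im] at hre him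
    norm_num [abs_of_pos hσ] at hre him
    have := mul_le_mul_of_nonneg_right (min_le_right σ 1) (abs_nonneg t)
    simp only [c]
    linarith [min_le_left σ 1]
  have hcont : Continuous (fun t : ℝ ↦ ((σ : ℂ) + t * I) ^ (-a)) :=
    (by fun_prop : Continuous fun t : ℝ ↦ (σ : ℂ) + t * I).cpow continuous_const
      fun t ↦ .inl (by simpa using hσ)
  refine ((integrable_one_add_norm (E := ℝ) (r := a.re) (by simpa using ha)).const_mul
    (Real.exp (π * |a.im|) * c ^ (-a.re))).mono' hcont.aestronglyMeasurable
    (.of_forall fun t ↦ (norm_cpow_neg_le _ a).trans ?_)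
  rw [mul_assoc, ← Real.mul_rpow hc.le (by positivity), Real.norm_eq_abs]
  exact mul_le_mul_of_nonneg_left
    (Real.rpow_le_rpow_of_nonpos (by positivity) (hnorm t) (by linarith)) (by positivity)

section Fourier

open scoped FourierTransform

variable {a : ℂ}

lemma fourier_indicator_cpow_mul_cexp_neg_mul (ha : 0 < a.re) {z : ℂ} (hz : 0 < z.re) (ξ : ℝ) :
    𝓕 ((Ioi 0).indicator fun u : ℝ ↦ (u : ℂ) ^ (a - 1) * cexp (-(z * u))) ξ
      = Gamma a * (z + ↑(2 * π * ξ) * I) ^ (-a) := by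
  rw [Real.fourier_real_eq_integral_exp_smul,
    ← integral_cpow_mul_cexp_neg_mul_Ioi ha (by simpa), ← integral_indicator measurableSet_Ioi]
  congr 1 with u
  by_cases hu : u ∈ Ioi 0
  · rw [indicator_of_mem hu, indicator_of_mem hu, smul_eq_mul, mul_left_comm, ← Complex.exp_add]
    push_cast
    ring_nf
  · simp [indicator_of_notMem hu]

lemma fourierInv_comp_two_pi_mul (f : ℝ → ℂ) (x : ℝ) :
    𝓕⁻ (fun ξ : ℝ ↦ f (2 * π * ξ)) x = (2 * π : ℂ)⁻¹ * ∫ t : ℝ, cexp (x * t * I) * f t := by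
  have hscale := Measure.integral_comp_mul_left (fun t : ℝ ↦ cexp (x * t * I) * f t) (2 * π)
  rw [abs_of_pos (by positivity), Complex.real_smul] at hscale
  push_cast at hscale
  rw [fourierInv_eq', ← hscale]
  congr 1 with v
  simp only [Real.inner_apply, smul_eq_mul]
  push_cast
  ring_nf

theorem integral_cexp_mul_cpow_neg_vertical (ha : 1 < a.re) {σ x : ℝ} (hσ : 0 < σ) (hx : 0 < x) :
    (1 / (2 * π) : ℂ) * ∫ t : ℝ, cexp (x * (σ + t * I)) * ((σ : ℂ) + t * I) ^ (-a)
      = x ^ (a - 1) / Gamma a := by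
  set g := (Ioi 0).indicator fun u : ℝ ↦ (u : ℂ) ^ (a - 1) * cexp (-(σ * u))
  have ha₀ : 0 < a.re := by linarith
  have hg : Integrable g := (integrable_indicator_iff measurableSet_Ioi).2
    (integrableOn_cpow_mul_cexp_neg_mul_Ioi ha₀ (by simpa using hσ))
  have hFg : 𝓕 g = fun ξ ↦ Gamma a * ((σ : ℂ) + ↑(2 * π * ξ) * I) ^ (-a) :=
    funext (fourier_indicator_cpow_mul_cexp_neg_mul ha₀ (by simpa using hσ))
  have hFg_int : Integrable (𝓕 g) := by
    rw [hFg]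
    exact ((integrable_cpow_neg_vertical hσ ha).const_mul _).comp_mul_left' (R := 2 * π)
      (by positivity)
  have hgx : ContinuousAt g x := by
    refine ((continuousOn_cpow_mul_cexp_neg_mul a σ).continuousAt (Ioi_mem_nhds hx)).congr ?_
    filter_upwards [Ioi_mem_nhds hx] with u hu using
      (indicator_of_mem hu fun u : ℝ ↦ (u : ℂ) ^ (a - 1) * cexp (-(σ * u))).symm
  have hinv := hg.fourierInv_fourier_eq hFg_int hgx
  rw [hFg, fourierInv_comp_two_pi_mul
    (fun t : ℝ ↦ Gamma a * ((σ : ℂ) + t * I) ^ (-a))] at hinv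
  simp only [g, indicator_of_mem (show x ∈ Ioi (0 : ℝ) from hx)] at hinv
  have hexp : cexp (x * σ) * cexp (-(σ * x)) = 1 := by
    rw [← Complex.exp_add, mul_comm, add_neg_cancel, Complex.exp_zero]
  have hsplit : ∀ t : ℝ, cexp (x * (σ + t * I)) * ((σ : ℂ) + t * I) ^ (-a)
      = cexp (x * σ) / Gamma a * (cexp (x * t * I) * (Gamma a * ((σ : ℂ) + t * I) ^ (-a))) := by
    intro t
    rw [mul_add, Complex.exp_add]
    field_simp [Gamma_ne_zero_of_re_pos ha₀]
  simp_rw [hsplit]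
  rw [integral_const_mul, one_div, mul_left_comm, hinv]
  linear_combination x ^ (a - 1) / Gamma a * hexp

end Fourier

theorem I2_term_evaluation_general (ρ : ℂ) (hρ1 : 0 < ρ.re)
    (N : ℕ) (hN : 0 < N) (k : ℝ) (hk : 0 < k) :
    (1 / (2 * Real.pi) : ℂ) *
      ∫ t : ℝ, Complex.exp ((N : ℂ) * ((1 / N : ℂ) + t * Complex.I))
        * ((1 / N : ℂ) + t * Complex.I) ^ (-(k : ℂ) - 2 - ρ)
    = (N : ℂ) ^ ((k : ℂ) + 1 + ρ) / Complex.Gamma (ρ + (k : ℂ) + 2) := by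
  have hσ : (0 : ℝ) < 1 / N := by positivity
  have key := integral_cexp_mul_cpow_neg_vertical (a := ρ + k + 2)
    (by simp only [add_re, ofReal_re, re_ofNat]; linarith) hσ (Nat.cast_pos.mpr hN)
  rw [show -(k : ℂ) - 2 - ρ = -(ρ + k + 2) by ring, show (k : ℂ) + 1 + ρ = ρ + k + 2 - 1 by ring]
  push_cast at key
  exact key

theorem I2_term_evaluation (ρ : ℂ) (hρ1 : 0 < ρ.re) (hρ2 : ρ.re < 1)
    (N : ℕ) (hN : 0 < N) (k : ℝ) (hk : 0 < k) :
    (1 / (2 * Real.pi) : ℂ) *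
      ∫ t : ℝ, Complex.exp ((N : ℂ) * ((1 / N : ℂ) + t * Complex.I))
        * ((1 / N : ℂ) + t * Complex.I) ^ (-(k : ℂ) - 2 - ρ)
    = (N : ℂ) ^ ((k : ℂ) + 1 + ρ) / Complex.Gamma (ρ + (k : ℂ) + 2) :=
  I2_term_evaluation_general ρ hρ1 N hN k hk
end

section
/- For any real γ > 0, real α > 1 and real β ∈ (0,1), ∫_1^∞ exp(-γ arctan(1/u)) u^{-(α+β)} du ≤ C(α) · γ^{1-α-β} · (Γ(α-1) + Γ(α)), where C(α) depends only on α. -/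
open Real MeasureTheory

/-! Since `arctan y ≥ y / 2` on `[0, 1]`, the integrand is at most `exp (-γ / (2u)) u^(-s)` with
`s = α + β`. Over all of `(0, ∞)` the substitution `u = 1 / t` turns this majorant into a Gamma
integral, equal to `(γ / 2)^(1 - s) Γ(s - 1)`. Finally `Γ` is convex, so on `[α - 1, α]` it is
bounded by `max (Γ (α - 1)) (Γ α)`. -/

open Set

theorem Real.half_le_arctan {x : ℝ} (h0 : 0 ≤ x) (h1 : x ≤ 1) : x / 2 ≤ arctan x :=
  calc x / 2 ≤ x / √(1 + x ^ 2) :=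
        div_le_div_of_nonneg_left h0 (by positivity) (sqrt_le_iff.2 ⟨zero_le_two, by nlinarith⟩)
    _ = sin (arctan x) := (sin_arctan x).symm
    _ ≤ arctan x := sin_le (arctan_nonneg.2 h0)

theorem exp_neg_mul_arctan_inv_le_exp_neg_div {γ u : ℝ} (hγ : 0 ≤ γ) (hu : 1 ≤ u) :
    exp (-γ * arctan (1 / u)) ≤ exp (-(γ / 2 / u)) := by
  have harctan : 1 / u / 2 ≤ arctan (1 / u) :=
    half_le_arctan (by positivity) (div_le_one_of_le₀ hu (by positivity))
  rw [exp_le_exp, div_div, mul_comm 2 u, ← div_div, neg_mul, neg_le_neg_iff,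
    div_eq_mul_one_div γ u, mul_div_assoc]
  exact mul_le_mul_of_nonneg_left harctan hγ

theorem Real.Gamma_le_add_Gamma_add_one {a x : ℝ} (ha : 0 < a) (hx : x ∈ Icc a (a + 1)) :
    Gamma x ≤ Gamma a + Gamma (a + 1) :=
  (convexOn_Gamma.le_max_of_mem_Icc ha (by simp only [mem_Ioi]; linarith) hx).trans <|
    max_le_add_of_nonneg (Gamma_pos_of_pos ha).le (Gamma_pos_of_pos (by linarith)).le

theorem div_two_rpow_le_two_rpow_mul_rpow {γ t e : ℝ} (hγ : 0 ≤ γ) (h : -t ≤ e) :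
    (γ / 2) ^ t ≤ 2 ^ e * γ ^ t := by
  rw [div_rpow hγ zero_le_two, div_eq_mul_inv, ← rpow_neg zero_le_two, mul_comm]
  exact mul_le_mul_of_nonneg_right (rpow_le_rpow_of_exponent_le one_le_two h) (by positivity)

section InverseSubstitution

variable {c s : ℝ}

-- The integrand of `integral_comp_rpow_Ioi` for `p = -1` and the Gamma integrand `t^(s-2) e^(-ct)`.
theorem exp_neg_div_mul_rpow_neg_eq_comp_inv {x : ℝ} (hx : 0 < x) :
    (|(-1 : ℝ)| * x ^ ((-1 : ℝ) - 1)) •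
        ((x ^ (-1 : ℝ)) ^ (s - 1 - 1) * exp (-(c * x ^ (-1 : ℝ))))
      = exp (-(c / x)) * x ^ (-s) := by
  rw [rpow_neg_one, inv_rpow hx.le, ← rpow_neg hx.le, smul_eq_mul, abs_neg, abs_one, one_mul,
    ← div_eq_mul_inv, ← mul_assoc, ← rpow_add hx, mul_comm]
  ring_nf

theorem integrableOn_exp_neg_div_mul_rpow_neg (hc : 0 < c) (hs : 1 < s) :
    IntegrableOn (fun u => exp (-(c / u)) * u ^ (-s)) (Ioi 0) := by
  have hGamma : IntegrableOn (fun t => t ^ (s - 1 - 1) * exp (-(c * t))) (Ioi 0) := by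
    simpa only [rpow_one, neg_mul] using
      integrableOn_rpow_mul_exp_neg_mul_rpow (by linarith : -1 < s - 1 - 1) one_pos hc
  rw [← integrableOn_Ioi_comp_rpow_iff _ (by norm_num : (-1 : ℝ) ≠ 0)] at hGamma
  exact hGamma.congr_fun (fun x hx => exp_neg_div_mul_rpow_neg_eq_comp_inv hx) measurableSet_Ioi

theorem integral_exp_neg_div_mul_rpow_neg (hc : 0 < c) (hs : 1 < s) :
    ∫ u in Ioi 0, exp (-(c / u)) * u ^ (-s) = c ^ (1 - s) * Gamma (s - 1) := by
  have hsub := integral_comp_rpow_Ioi (fun t => t ^ (s - 1 - 1) * exp (-(c * t)))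
    (by norm_num : (-1 : ℝ) ≠ 0)
  rw [integral_rpow_mul_exp_neg_mul_Ioi (by linarith) hc, one_div, inv_rpow hc.le,
    ← rpow_neg hc.le, neg_sub] at hsub
  rw [← hsub]
  exact setIntegral_congr_fun measurableSet_Ioi
    (fun x hx => (exp_neg_div_mul_rpow_neg_eq_comp_inv hx).symm)

end InverseSubstitution

theorem integral_bound_gamma (α : ℝ) (hα : 1 < α) :
    ∃ C > 0, ∀ γ : ℝ, 0 < γ → ∀ β : ℝ, 0 < β → β < 1 →
      (∫ u in Set.Ioi (1 : ℝ), Real.exp (-γ * Real.arctan (1 / u)) * u ^ (-(α + β)))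
        ≤ C * γ ^ (1 - α - β) * (Real.Gamma (α - 1) + Real.Gamma α) := by
  refine ⟨2 ^ α, by positivity, fun γ hγ β hβ0 hβ1 => ?_⟩
  have hs : 1 < α + β := by linarith
  have hconst : (γ / 2) ^ (1 - (α + β)) ≤ 2 ^ α * γ ^ (1 - α - β) := by
    simpa only [sub_add_eq_sub_sub] using
      div_two_rpow_le_two_rpow_mul_rpow (t := 1 - (α + β)) hγ.le (by linarith)
  have hGamma : Gamma (α + β - 1) ≤ Gamma (α - 1) + Gamma α := by
    simpa using Gamma_le_add_Gamma_add_one (x := α + β - 1) (by linarith : 0 < α - 1)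
      ⟨by linarith, by linarith⟩
  have hint := integrableOn_exp_neg_div_mul_rpow_neg (half_pos hγ) hs
  have hnonneg : ∀ u ∈ Ioi (0 : ℝ), 0 ≤ exp (-(γ / 2 / u)) * u ^ (-(α + β)) :=
    fun u hu => by have : 0 < u := hu; positivity
  calc (∫ u in Ioi 1, exp (-γ * arctan (1 / u)) * u ^ (-(α + β)))
      ≤ ∫ u in Ioi 1, exp (-(γ / 2 / u)) * u ^ (-(α + β)) := by
        refine integral_mono_of_nonneg ?_ (hint.mono_set (Ioi_subset_Ioi zero_le_one)) ?_
        · filter_upwards [ae_restrict_mem measurableSet_Ioi] with u (hu : 1 < u)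
          have : 0 < u := by linarith
          positivity
        · filter_upwards [ae_restrict_mem measurableSet_Ioi] with u (hu : 1 < u)
          exact mul_le_mul_of_nonneg_right (exp_neg_mul_arctan_inv_le_exp_neg_div hγ.le hu.le)
            (by positivity)
    _ ≤ ∫ u in Ioi 0, exp (-(γ / 2 / u)) * u ^ (-(α + β)) :=
        setIntegral_mono_set hint ((ae_restrict_mem measurableSet_Ioi).mono hnonneg)
          (Ioi_subset_Ioi zero_le_one).eventuallyLE
    _ = (γ / 2) ^ (1 - (α + β)) * Gamma (α + β - 1) :=
        integral_exp_neg_div_mul_rpow_neg (half_pos hγ) hs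
    _ ≤ 2 ^ α * γ ^ (1 - α - β) * (Gamma (α - 1) + Gamma α) :=
        mul_le_mul hconst hGamma (Gamma_pos_of_pos (by linarith)).le (by positivity)
end
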